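/- A symmetric m×m real matrix A with nonnegative entries satisfies: there exists a row-stochastic matrix X with A = (X + Xᵀ)/2, if and only if A ∈ 𝐔^m, i.e., for every subset α ⊆ {1,…,m} we have ∑_{i,j∈α} a_{ij} ≤ |α|, and ∑_{i,j=1}^m a_{ij} = m. -/

import Mathlib

open Matrix Finset

def IsInU {m : ℕ} (A : Matrix (Fin m) (Fin m) ℝ) : Prop :=
  A.IsSymm ∧ (∀ i j, 0 ≤ A i j) ∧
    ∀ α : Finset (Fin m), ∑ i ∈ α, ∑ j ∈ α, A i j ≤ (α.card : ℝ)

def IsInUtop {m : ℕ} (A : Matrix (Fin m) (Fin m) ℝ) : Prop :=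
  IsInU A ∧ ∑ i, ∑ j, A i j = (m : ℝ)

def IsExtremeIn {m : ℕ} (S : Matrix (Fin m) (Fin m) ℝ → Prop)
    (A : Matrix (Fin m) (Fin m) ℝ) : Prop :=
  S A ∧ ∀ A₁ A₂, S A₁ → S A₂ → A₁ + A₂ = (2 : ℝ) • A → A₁ = A ∧ A₂ = A

def IsRowStochastic {m : ℕ} (X : Matrix (Fin m) (Fin m) ℝ) : Prop :=
  (∀ i j, 0 ≤ X i j) ∧ ∀ i, ∑ j, X i j = 1

def IsSubstochastic {m : ℕ} (X : Matrix (Fin m) (Fin m) ℝ) : Prop :=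
  (∀ i j, 0 ≤ X i j) ∧ ∀ i, ∑ j, X i j ≤ 1

/-!
Necessity: the box sums `∑_{i,j ∈ α}` of `(X + Xᵀ)/2` and of `X` agree, and for a row-stochastic
`X` they are at most `|α|`.

Sufficiency: among the nonnegative `X` with `X + Xᵀ = 2A`, a nonempty compact set, take one
minimising the sum of the squared row sums `R i`. Moving mass `δ` from `X i j` to `X j i` stays in
the set and shifts `R i` and `R j` by `∓δ`, so at a minimiser `X i j > 0` forces `R i ≤ R j`.
Hence `X` has no mass leaving the set `α` of rows of maximal sum, and
`|α| · max R = ∑_{i,j ∈ α} A i j ≤ |α|`. So every `R i ≤ 1`, and `∑ R = m` makes them all `1`.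
-/

namespace Matrix

variable {ι : Type*}

theorem sum_box_eq_of_add_transpose_eq {X A : Matrix ι ι ℝ} (h : X + Xᵀ = (2 : ℝ) • A)
    (s : Finset ι) : ∑ i ∈ s, ∑ j ∈ s, X i j = ∑ i ∈ s, ∑ j ∈ s, A i j := by
  have hsum : ∑ i ∈ s, ∑ j ∈ s, (X i j + X j i) = 2 * ∑ i ∈ s, ∑ j ∈ s, A i j := by
    simp only [mul_sum]
    refine sum_congr rfl fun i _ => sum_congr rfl fun j _ => ?_
    simpa using congrFun₂ h i j
  have hswap : ∑ i ∈ s, ∑ j ∈ s, X j i = ∑ i ∈ s, ∑ j ∈ s, X i j := sum_comm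
  simp only [sum_add_distrib, hswap] at hsum
  linarith

def nonnegSplittings (A : Matrix ι ι ℝ) : Set (Matrix ι ι ℝ) :=
  {X | (∀ i j, 0 ≤ X i j) ∧ X + Xᵀ = (2 : ℝ) • A}

theorem isCompact_nonnegSplittings (A : Matrix ι ι ℝ) : IsCompact (nonnegSplittings A) := by
  have hclosed : IsClosed (nonnegSplittings A) := by
    simp only [nonnegSplittings, Set.ofPred_and, Set.ofPred_forall]
    exact (isClosed_iInter fun i => isClosed_iInter fun j =>
      isClosed_le continuous_const ((continuous_apply j).comp (continuous_apply i))).inter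
      (isClosed_eq ((continuous_id (X := Matrix ι ι ℝ)).add continuous_id.matrix_transpose)
        continuous_const)
  refine (isCompact_univ_pi fun i => isCompact_univ_pi fun j =>
    isCompact_Icc (a := 0) (b := 2 * A i j)).of_isClosed_subset hclosed ?_
  rintro (X : Matrix ι ι ℝ) ⟨hX, hXA⟩ i - j -
  have := congrFun₂ hXA i j
  simp only [add_apply, transpose_apply, smul_apply, smul_eq_mul] at this
  exact ⟨hX i j, by linarith [hX j i]⟩

section transfer

variable [DecidableEq ι]

def transferEntry (X : Matrix ι ι ℝ) (i j : ι) (δ : ℝ) : Matrix ι ι ℝ :=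
  X + δ • (single j i 1 - single i j 1)

variable {X : Matrix ι ι ℝ} {i j : ι} {δ : ℝ}

theorem transferEntry_add_transpose :
    transferEntry X i j δ + (transferEntry X i j δ)ᵀ = X + Xᵀ := by
  simp only [transferEntry, transpose_add, transpose_smul, transpose_sub, transpose_single,
    smul_sub]
  abel

theorem transferEntry_nonneg (hij : i ≠ j) (hX : ∀ k l, 0 ≤ X k l) (hδ : 0 ≤ δ)
    (hδX : δ ≤ X i j) (k l : ι) : 0 ≤ transferEntry X i j δ k l := by
  simp only [transferEntry, add_apply, smul_apply, sub_apply, single_apply, smul_eq_mul]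
  by_cases hkl : i = k ∧ j = l
  · obtain ⟨rfl, rfl⟩ := hkl
    simpa [hij] using hδX
  · rw [if_neg hkl]
    split_ifs <;> nlinarith [hX k l]

end transfer

variable [Fintype ι]

theorem mulVec_one_apply (X : Matrix ι ι ℝ) (i : ι) : (X *ᵥ 1) i = ∑ j, X i j := by
  simp [mulVec, dotProduct]

theorem mulVec_one_le_one_of_sum_box_le_card {X : Matrix ι ι ℝ} (hX : ∀ i j, 0 ≤ X i j)
    (hmono : ∀ i j, i ≠ j → 0 < X i j → (X *ᵥ 1) i ≤ (X *ᵥ 1) j)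
    (hbox : ∀ s : Finset ι, ∑ i ∈ s, ∑ j ∈ s, X i j ≤ #s) (i : ι) : (X *ᵥ 1) i ≤ 1 := by
  set R := X *ᵥ 1
  obtain ⟨k, -, hk⟩ := exists_max_image univ R ⟨i, mem_univ i⟩
  set s := univ.filter fun a => R a = R k
  have hks : k ∈ s := by simp [s]
  have hleak : ∀ a ∈ s, ∀ b ∉ s, X a b = 0 := by
    intro a ha b hb
    simp only [s, mem_filter, mem_univ, true_and] at ha hb
    by_contra hne
    have hab : a ≠ b := by rintro rfl; exact hb ha
    have := hmono a b hab ((hX a b).lt_of_ne' hne)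
    exact hb (le_antisymm (hk b (mem_univ b)) (ha ▸ this))
  have hrow : ∀ a ∈ s, R a = ∑ b ∈ s, X a b := fun a ha =>
    (mulVec_one_apply X a).trans (sum_subset (subset_univ s) fun b _ hb => hleak a ha b hb).symm
  have hcard : #s * R k ≤ #s :=
    calc #s * R k = ∑ a ∈ s, R a := by
          rw [sum_congr rfl fun a ha => (mem_filter.1 ha).2, sum_const, nsmul_eq_mul]
      _ = ∑ a ∈ s, ∑ b ∈ s, X a b := sum_congr rfl hrow
      _ ≤ #s := hbox s
  have hpos : (0 : ℝ) < #s := by exact_mod_cast card_pos.2 ⟨k, hks⟩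
  exact (hk i (mem_univ i)).trans (le_of_mul_le_mul_left (by rwa [mul_one]) hpos)

variable [DecidableEq ι]

theorem transferEntry_mulVec_one (X : Matrix ι ι ℝ) (i j : ι) (δ : ℝ) :
    transferEntry X i j δ *ᵥ 1 = X *ᵥ 1 + δ • (Pi.single j 1 - Pi.single i 1) := by
  simp [transferEntry, add_mulVec, smul_mulVec, sub_mulVec, single_mulVec_eq]

theorem dotProduct_self_add_smul_single_sub_single (v : ι → ℝ) {i j : ι} (hij : i ≠ j) (δ : ℝ) :
    (v + δ • (Pi.single j 1 - Pi.single i 1)) ⬝ᵥ (v + δ • (Pi.single j 1 - Pi.single i 1)) =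
      v ⬝ᵥ v + 2 * δ * (v j - v i + δ) := by
  simp only [dotProduct_add, add_dotProduct, smul_dotProduct, sub_dotProduct, single_dotProduct,
    one_mul, smul_eq_mul, dotProduct_smul, dotProduct_sub, dotProduct_single, Pi.add_apply,
    Pi.smul_apply, Pi.sub_apply, Pi.single_eq_same, Pi.single_eq_of_ne hij,
    Pi.single_eq_of_ne hij.symm, sub_zero, mul_one, zero_sub, mul_neg]
  ring

theorem mulVec_one_le_of_isMinOn {A X : Matrix ι ι ℝ} (hX : X ∈ nonnegSplittings A)
    (hmin : IsMinOn (fun Y : Matrix ι ι ℝ => (Y *ᵥ 1) ⬝ᵥ (Y *ᵥ 1)) (nonnegSplittings A) X)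
    {i j : ι} (hij : i ≠ j) (hpos : 0 < X i j) : (X *ᵥ 1) i ≤ (X *ᵥ 1) j := by
  by_contra! hlt
  set δ := min (X i j) (((X *ᵥ 1) i - (X *ᵥ 1) j) / 2)
  have hδ : 0 < δ := lt_min hpos (by linarith)
  have hmem : transferEntry X i j δ ∈ nonnegSplittings A :=
    ⟨transferEntry_nonneg hij hX.1 hδ.le (min_le_left _ _),
      transferEntry_add_transpose.trans hX.2⟩
  have hle : (X *ᵥ 1) ⬝ᵥ (X *ᵥ 1) ≤ (transferEntry X i j δ *ᵥ 1) ⬝ᵥ (transferEntry X i j δ *ᵥ 1) :=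
    hmin hmem
  rw [transferEntry_mulVec_one, dotProduct_self_add_smul_single_sub_single _ hij] at hle
  nlinarith [min_le_right (X i j) (((X *ᵥ 1) i - (X *ᵥ 1) j) / 2)]

theorem sum_box_le_card_of_mem_rowStochastic {X : Matrix ι ι ℝ} (hX : X ∈ rowStochastic ℝ ι)
    (s : Finset ι) : ∑ i ∈ s, ∑ j ∈ s, X i j ≤ #s :=
  calc ∑ i ∈ s, ∑ j ∈ s, X i j ≤ ∑ i ∈ s, ∑ j, X i j :=
        sum_le_sum fun i _ => sum_le_sum_of_subset_of_nonneg (subset_univ s) fun j _ _ => hX.1 i j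
    _ = #s := by simp [sum_row_of_mem_rowStochastic hX]

theorem exists_mem_rowStochastic_add_transpose_eq {A : Matrix ι ι ℝ} (hA : A.IsSymm)
    (hnn : ∀ i j, 0 ≤ A i j) (hbox : ∀ s : Finset ι, ∑ i ∈ s, ∑ j ∈ s, A i j ≤ #s)
    (htot : ∑ i, ∑ j, A i j = Fintype.card ι) :
    ∃ X ∈ rowStochastic ℝ ι, X + Xᵀ = (2 : ℝ) • A := by
  have hAmem : A ∈ nonnegSplittings A := ⟨hnn, by rw [hA.eq, two_smul]⟩
  obtain ⟨X, hX, hmin⟩ := (isCompact_nonnegSplittings A).exists_isMinOn ⟨A, hAmem⟩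
    (by fun_prop : Continuous fun Y : Matrix ι ι ℝ => (Y *ᵥ 1) ⬝ᵥ (Y *ᵥ 1)).continuousOn
  have hle : ∀ i, (X *ᵥ 1) i ≤ 1 :=
    mulVec_one_le_one_of_sum_box_le_card hX.1 (fun i j => mulVec_one_le_of_isMinOn hX hmin)
      fun s => (sum_box_eq_of_add_transpose_eq hX.2 s).trans_le (hbox s)
  have hsum : ∑ i, (X *ᵥ 1) i = ∑ i, (1 : ι → ℝ) i := by
    simp [mulVec_one_apply, sum_box_eq_of_add_transpose_eq hX.2 univ, htot]
  exact ⟨X, ⟨hX.1, funext fun i => (sum_eq_sum_iff_of_le fun i _ => hle i).1 hsum i (mem_univ i)⟩,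
    hX.2⟩

end Matrix

theorem isInUtop_half_smul_add_transpose {m : ℕ} {X : Matrix (Fin m) (Fin m) ℝ}
    (hX : IsRowStochastic X) : IsInUtop ((1 / 2 : ℝ) • (X + Xᵀ)) := by
  have hX' : X ∈ rowStochastic ℝ (Fin m) := mem_rowStochastic_iff_sum.2 hX
  have hsplit : X + Xᵀ = (2 : ℝ) • ((1 / 2 : ℝ) • (X + Xᵀ)) := by rw [smul_smul]; norm_num
  refine ⟨⟨(isSymm_add_transpose_self X).smul _, fun i j => ?_, fun s => ?_⟩, ?_⟩
  · simp only [Matrix.smul_apply, Matrix.add_apply, transpose_apply, smul_eq_mul]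
    linarith [hX.1 i j, hX.1 j i]
  · rw [← sum_box_eq_of_add_transpose_eq hsplit]
    exact sum_box_le_card_of_mem_rowStochastic hX' s
  · rw [← sum_box_eq_of_add_transpose_eq hsplit univ]
    simp [hX.2]

theorem stmt_0 {m : ℕ} (A : Matrix (Fin m) (Fin m) ℝ) :
    (∃ X : Matrix (Fin m) (Fin m) ℝ, IsRowStochastic X ∧ A = (1/2 : ℝ) • (X + Xᵀ)) ↔
      IsInUtop A := by
  constructor
  · rintro ⟨X, hX, rfl⟩
    exact isInUtop_half_smul_add_transpose hX
  · rintro ⟨⟨hsymm, hnn, hbox⟩, htot⟩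
    obtain ⟨X, hX, hXA⟩ :=
      exists_mem_rowStochastic_add_transpose_eq hsymm hnn hbox (by simpa using htot)
    refine ⟨X, mem_rowStochastic_iff_sum.1 hX, ?_⟩
    rw [hXA, smul_smul]
    norm_num
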